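/- The group of field automorphisms of ℂ has cardinality 2^(2^ℵ₀). -/

import Mathlib

/-!
An uncountable algebraically closed field `K` has a transcendence basis `s` over its prime ring
with `#s = #K`. Every permutation of `s` extends to an automorphism of the purely transcendental
subfield it generates, and then, `K` being an algebraic closure of that subfield, to an
automorphism of `K`; distinct permutations give distinct automorphisms. Hence `K` has at least
`#(Equiv.Perm s) = 2 ^ #K` automorphisms, and at most as many as it has permutations.
-/

open Cardinal

theorem mk_ringAut_le_two_power (α : Type*) [Mul α] [Add α] [Infinite α] :
    #(α ≃+* α) ≤ 2 ^ #α :=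
  mk_perm_eq_two_power (α := α) ▸
    mk_le_of_injective (f := RingEquiv.toEquiv) fun _ _ h ↦ RingEquiv.ext (Equiv.congr_fun h)

namespace IsAlgClosed

section TranscendenceBasis

variable {R K L : Type*} [CommRing R] [Field K] [Algebra R K] [Field L] [Algebra R L]
  [IsAlgClosed K] [IsAlgClosed L] {ι κ : Type*}

theorem equivOfTranscendenceBasis_apply (v : ι → K) (w : κ → L) (e : ι ≃ κ)
    (hv : IsTranscendenceBasis R v) (hw : IsTranscendenceBasis R w) (i : ι) :
    equivOfTranscendenceBasis v w e hv hw (v i) = w (e i) := by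
  have hvi : v i = algebraMap (Algebra.adjoin R (Set.range v)) K
      ⟨v i, Algebra.subset_adjoin ⟨i, rfl⟩⟩ := rfl
  rw [equivOfTranscendenceBasis, hvi, IsAlgClosure.equivOfEquiv_algebraMap]
  have hX : hv.1.aevalEquiv.symm ⟨v i, Algebra.subset_adjoin ⟨i, rfl⟩⟩ = MvPolynomial.X i :=
    hv.1.aevalEquiv.symm_apply_eq.2 (Subtype.ext (by simp))
  simp [hX]

theorem injective_equivOfTranscendenceBasis {v : ι → K} (hv : IsTranscendenceBasis R v) :
    Function.Injective fun e : Equiv.Perm ι ↦ equivOfTranscendenceBasis v v e hv hv := by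
  have := RingHom.domain_nontrivial (algebraMap R K)
  intro e f hef
  ext i
  apply hv.1.injective
  simpa only [equivOfTranscendenceBasis_apply] using RingEquiv.congr_fun hef (v i)

end TranscendenceBasis

variable {K : Type*} [Field K] [IsAlgClosed K]

theorem two_power_le_mk_ringAut (hK : ℵ₀ < #K) : 2 ^ #K ≤ #(K ≃+* K) := by
  -- the prime ring: countable and, unlike `ℤ`, acting faithfully on `K` in every characteristic
  let R := (Int.castRingHom K).range
  have hR : #R ≤ ℵ₀ := mk_le_aleph0_iff.2 (Set.countable_range (Int.castRingHom K)).to_subtype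
  obtain ⟨s, hs⟩ := exists_isTranscendenceBasis R K
  have hKs : #K = #s := cardinal_eq_cardinal_transcendence_basis_of_aleph0_lt' _ hs hR hK
  have : Infinite s := infinite_iff.2 (hKs ▸ hK.le)
  calc 2 ^ #K = #(Equiv.Perm s) := by rw [hKs, mk_perm_eq_two_power]
    _ ≤ #(K ≃+* K) := mk_le_of_injective (injective_equivOfTranscendenceBasis hs)

theorem mk_ringAut_eq_two_power (hK : ℵ₀ < #K) : #(K ≃+* K) = 2 ^ #K :=
  have : Infinite K := infinite_iff.2 hK.le
  (mk_ringAut_le_two_power K).antisymm (two_power_le_mk_ringAut hK)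

end IsAlgClosed

theorem card_complex_ringAut :
    Cardinal.mk (ℂ ≃+* ℂ) = (2 : Cardinal) ^ ((2 : Cardinal) ^ Cardinal.aleph0) := by
  rw [two_power_aleph0, ← mk_complex]
  exact IsAlgClosed.mk_ringAut_eq_two_power (mk_complex ▸ aleph0_lt_continuum)
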